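/- arXiv:1312.5671 — 2 statements merged into one kernel-verified Lean document; each statement's English description precedes it below -/
import Mathlib

section
/- Partial free cumulant expansion: for noncrossing partitions ρ ≤ σ in NC_n, the partial cumulant C_{ρ,σ} := ∑_{ρ ≤ π ≤ σ} φ_π μ(π, σ) satisfies C_{ρ,σ}(X_1,…,X_n) = ∑_{τ ∈ NC_n : τ ∨ ρ = σ} C_τ(X_1,…,X_n), where ∨ is the join in NC_n. -/
/-!
Let `C_τ = ∑_{π ≤ τ} φ_π μ(π, τ)`. Möbius inversion gives `φ_κ = ∑_{τ ≤ κ} C_τ`; substituting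
this into `C_{ρ,σ} = ∑_{ρ ≤ κ ≤ σ} φ_κ μ(κ, σ)` and exchanging the sums, the coefficient of `C_τ`
is `∑_{τ ∨ ρ ≤ κ ≤ σ} μ(κ, σ)`, which is `1` if `τ ∨ ρ = σ` and `0` otherwise.
-/

open scoped Classical

instance {α : Type*} [Finite α] : Finite (Setoid α) :=
  Finite.of_injective (fun s : Setoid α => s.r) fun s t h => by
    cases s; cases t; congr

noncomputable instance {α : Type*} [Finite α] : Fintype (Setoid α) := Fintype.ofFinite _

/-- The blocks (equivalence classes) of a partition, as a finset of finsets. -/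
noncomputable def blocks {α : Type*} [Fintype α] (π : Setoid α) : Finset (Finset α) :=
  Finset.univ.image (fun i => Finset.univ.filter (fun j => π.r i j))

/-- The ordered (noncommutative) product of the variables `X i`, `i ∈ b`,
taken in increasing order of the indices. -/
noncomputable def orderedProd {α A : Type*} [LinearOrder α] [Ring A] (b : Finset α)
    (X : α → A) : A :=
  ((b.sort (· ≤ ·)).map X).prod

/-- A partition of `{1,…,n}` (as a setoid on `Fin n`) is noncrossing if there are no
`i < j < k < l` with `i ∼ k`, `j ∼ l` but `i ≁ j`. -/
def IsNoncrossing {n : ℕ} (π : Setoid (Fin n)) : Prop :=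
  ¬ ∃ i j k l : Fin n, i < j ∧ j < k ∧ k < l ∧ π.r i k ∧ π.r j l ∧ ¬ π.r i j

/-- The noncrossing partition lattice `NC_n` (as a subtype of setoids on `Fin n`). -/
abbrev NCPart (n : ℕ) := {π : Setoid (Fin n) // IsNoncrossing π}

noncomputable def zetaMatrix (P R : Type*) [LE P] [Zero R] [One R] : Matrix P P R :=
  Matrix.of fun a b => if a ≤ b then 1 else 0

noncomputable def incidenceMatrix {P R : Type*} [LE P] [Zero R] (mu : P → P → R) :
    Matrix P P R :=
  Matrix.of fun a b => if a ≤ b then mu a b else 0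

section Moebius

variable {P R : Type*} [PartialOrder P] [Fintype P] [DecidableEq P] [CommRing R] {mu : P → P → R}

def IsMoebiusFunction (mu : P → P → R) : Prop :=
  ∀ π σ : P, π ≤ σ →
    (∑ ρ ∈ Finset.univ.filter (fun ρ => π ≤ ρ ∧ ρ ≤ σ), mu ρ σ) = if π = σ then 1 else 0

lemma sum_filter_le_le_moebius_right (hmu : IsMoebiusFunction mu) (π σ : P) :
    (∑ ρ ∈ Finset.univ.filter (fun ρ => π ≤ ρ ∧ ρ ≤ σ), mu ρ σ) = if π = σ then 1 else 0 := by
  by_cases hπσ : π ≤ σ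
  · exact hmu π σ hπσ
  · rw [if_neg (fun h => hπσ h.le), Finset.sum_eq_zero]
    intro ρ hρ
    exact absurd ((Finset.mem_filter.mp hρ).2.elim le_trans) hπσ

lemma zetaMatrix_mul_incidenceMatrix (hmu : IsMoebiusFunction mu) :
    zetaMatrix P R * incidenceMatrix mu = 1 := by
  ext π σ
  rw [Matrix.mul_apply, Matrix.one_apply, ← sum_filter_le_le_moebius_right hmu, Finset.sum_filter]
  refine Finset.sum_congr rfl fun ρ _ => ?_
  by_cases h₁ : π ≤ ρ <;> by_cases h₂ : ρ ≤ σ <;> simp [zetaMatrix, incidenceMatrix, h₁, h₂]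

/-- The Möbius recursion from the right implies the one from the left, since a one-sided
inverse of a square matrix is two-sided. -/
lemma sum_filter_le_le_moebius_left (hmu : IsMoebiusFunction mu) (π σ : P) :
    (∑ ρ ∈ Finset.univ.filter (fun ρ => π ≤ ρ ∧ ρ ≤ σ), mu π ρ) = if π = σ then 1 else 0 := by
  have h : (incidenceMatrix mu * zetaMatrix P R) π σ = (1 : Matrix P P R) π σ := by
    rw [mul_eq_one_comm.mp (zetaMatrix_mul_incidenceMatrix hmu)]
  rw [Matrix.mul_apply, Matrix.one_apply] at h
  rw [← h, Finset.sum_filter]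
  refine Finset.sum_congr rfl fun ρ _ => ?_
  by_cases h₁ : π ≤ ρ <;> by_cases h₂ : ρ ≤ σ <;> simp [zetaMatrix, incidenceMatrix, h₁, h₂]

theorem sum_filter_le_sum_filter_le_mul_moebius (hmu : IsMoebiusFunction mu) (f : P → R)
    (κ : P) :
    (∑ τ ∈ Finset.univ.filter (· ≤ κ), ∑ π ∈ Finset.univ.filter (· ≤ τ), f π * mu π τ) = f κ := by
  rw [Finset.sum_comm' (t' := Finset.univ)
    (s' := fun π => Finset.univ.filter fun τ => π ≤ τ ∧ τ ≤ κ)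
    (by simp only [Finset.mem_filter, Finset.mem_univ, true_and, and_true]; tauto)]
  simp_rw [← Finset.mul_sum, sum_filter_le_le_moebius_left hmu, mul_ite, mul_one, mul_zero,
    Finset.sum_ite_eq', Finset.mem_univ, if_true]

lemma sum_filter_upperBounds_moebius (hmu : IsMoebiusFunction mu) {τ ρ J : P}
    (hJ : IsLUB {τ, ρ} J) (σ : P) :
    (∑ κ ∈ Finset.univ.filter (fun κ => τ ≤ κ ∧ ρ ≤ κ ∧ κ ≤ σ), mu κ σ)
      = if IsLUB {τ, ρ} σ then 1 else 0 := by
  have hupper : Finset.univ.filter (fun κ => τ ≤ κ ∧ ρ ≤ κ ∧ κ ≤ σ)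
      = Finset.univ.filter (fun κ => J ≤ κ ∧ κ ≤ σ) := by
    ext κ
    simp [isLUB_le_iff hJ, upperBounds_insert, and_assoc]
  rw [hupper, sum_filter_le_le_moebius_right hmu]
  exact if_congr ⟨fun h => h ▸ hJ, hJ.unique⟩ rfl rfl

theorem sum_filter_le_le_mul_moebius_eq_sum_isLUB (hmu : IsMoebiusFunction mu)
    (f C : P → R) (hC : ∀ τ, C τ = ∑ π ∈ Finset.univ.filter (· ≤ τ), f π * mu π τ) {ρ : P}
    (hjoin : ∀ τ, ∃ J, IsLUB {τ, ρ} J) (σ : P) :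
    (∑ π ∈ Finset.univ.filter (fun π => ρ ≤ π ∧ π ≤ σ), f π * mu π σ)
      = ∑ τ ∈ Finset.univ.filter (fun τ => IsLUB ({τ, ρ} : Set P) σ), C τ := by
  calc (∑ π ∈ Finset.univ.filter (fun π => ρ ≤ π ∧ π ≤ σ), f π * mu π σ)
      = ∑ κ ∈ Finset.univ.filter (fun κ => ρ ≤ κ ∧ κ ≤ σ),
          ∑ τ ∈ Finset.univ.filter (· ≤ κ), C τ * mu κ σ := by
        simp_rw [← Finset.sum_mul, hC, sum_filter_le_sum_filter_le_mul_moebius hmu]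
    _ = ∑ τ, ∑ κ ∈ Finset.univ.filter (fun κ => τ ≤ κ ∧ ρ ≤ κ ∧ κ ≤ σ), C τ * mu κ σ :=
        Finset.sum_comm' <| by
          simp only [Finset.mem_filter, Finset.mem_univ, true_and, and_true]; tauto
    _ = ∑ τ, C τ * if IsLUB ({τ, ρ} : Set P) σ then 1 else 0 := by
        refine Finset.sum_congr rfl fun τ _ => ?_
        obtain ⟨J, hJ⟩ := hjoin τ
        rw [← Finset.mul_sum, sum_filter_upperBounds_moebius hmu hJ]
    _ = ∑ τ ∈ Finset.univ.filter (fun τ => IsLUB ({τ, ρ} : Set P) σ), C τ := by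
        simp [Finset.sum_filter]

end Moebius

lemma IsNoncrossing.sInf {n : ℕ} {S : Set (Setoid (Fin n))} (h : ∀ s ∈ S, IsNoncrossing s) :
    IsNoncrossing (sInf S) := by
  rintro ⟨i, j, k, l, hij, hjk, hkl, hik, hjl, hnij⟩
  refine hnij fun s hs => ?_
  by_contra hc
  exact h s hs ⟨i, j, k, l, hij, hjk, hkl, Setoid.sInf_iff.mp hik s hs,
    Setoid.sInf_iff.mp hjl s hs, hc⟩

/-- The join in `NC_n` is in general coarser than the join of setoids. -/
lemma NCPart.exists_isLUB {n : ℕ} (τ ρ : NCPart n) : ∃ J, IsLUB ({τ, ρ} : Set (NCPart n)) J := by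
  refine ⟨⟨sInf {s | IsNoncrossing s ∧ τ.1 ≤ s ∧ ρ.1 ≤ s}, IsNoncrossing.sInf fun _ hs => hs.1⟩,
    ?_, fun κ hκ => ?_⟩
  · rintro _ (rfl | rfl)
    exacts [Subtype.coe_le_coe.mp (le_sInf fun s hs => hs.2.1),
      Subtype.coe_le_coe.mp (le_sInf fun s hs => hs.2.2)]
  · simp only [upperBounds_insert, upperBounds_singleton, Set.mem_inter_iff, Set.mem_Ici] at hκ
    exact Subtype.coe_le_coe.mp (sInf_le ⟨κ.2, hκ⟩)

theorem stmt9_general {n : ℕ}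
    -- the Möbius function of `NC_n`
    (mu : NCPart n → NCPart n → ℂ)
    (hmu : ∀ π σ : NCPart n, π ≤ σ →
      (∑ ρ ∈ Finset.univ.filter (fun ρ => π ≤ ρ ∧ ρ ≤ σ), mu ρ σ) =
        if π = σ then 1 else 0)
    -- partitioned moments
    (φP : NCPart n → ℂ)
    -- free cumulants
    (C : NCPart n → ℂ)
    (hC : ∀ τ, C τ = ∑ π ∈ Finset.univ.filter (fun π => π ≤ τ), φP π * mu π τ)
    (ρ σ : NCPart n) :
    (∑ π ∈ Finset.univ.filter (fun π => ρ ≤ π ∧ π ≤ σ), φP π * mu π σ)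
      = ∑ τ ∈ Finset.univ.filter (fun τ => IsLUB ({τ, ρ} : Set (NCPart n)) σ), C τ :=
  sum_filter_le_le_mul_moebius_eq_sum_isLUB hmu φP C hC (NCPart.exists_isLUB · ρ) σ

/-- Partial free cumulants: for `ρ ≤ σ` in `NC_n`,
`C_{ρ,σ} := ∑_{ρ ≤ π ≤ σ} φ_π μ(π,σ)` equals `∑_{τ : τ ∨ ρ = σ} C_τ`,
where `∨` is the join in `NC_n` and `φ_π` is the multiplicative partitioned
moment functional of a noncommutative probability space `(A, φ)`. -/
theorem stmt9 {n : ℕ} {A : Type*} [Ring A] [Algebra ℂ A]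
    (φ : A →ₗ[ℂ] ℂ) (hφ : φ 1 = 1)
    (X : Fin n → A)
    -- the Möbius function of `NC_n`
    (mu : NCPart n → NCPart n → ℂ)
    (hmu : ∀ π σ : NCPart n, π ≤ σ →
      (∑ ρ ∈ Finset.univ.filter (fun ρ => π ≤ ρ ∧ ρ ≤ σ), mu ρ σ) =
        if π = σ then 1 else 0)
    -- partitioned moments
    (φP : NCPart n → ℂ)
    (hφP : ∀ π, φP π = ∏ b ∈ blocks π.val, φ (orderedProd b X))
    -- free cumulants
    (C : NCPart n → ℂ)
    (hC : ∀ τ, C τ = ∑ π ∈ Finset.univ.filter (fun π => π ≤ τ), φP π * mu π τ)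
    (ρ σ : NCPart n) (hle : ρ ≤ σ) :
    (∑ π ∈ Finset.univ.filter (fun π => ρ ≤ π ∧ π ≤ σ), φP π * mu π σ)
      = ∑ τ ∈ Finset.univ.filter (fun τ => IsLUB ({τ, ρ} : Set (NCPart n)) σ), C τ :=
  stmt9_general mu hmu φP C hC ρ σ
end

section
/- For π ∈ NC_n, the interval [π, 1̂_n] in NC_n is anti-isomorphic as a poset to the interval [0̂_n, K(π)] in NC_n, via the Kreweras complement map σ ↦ K(σ). -/
/-!
The Kreweras complement of `σ` is the partition `kreweras σ` in which `u ∼ v` iff the interval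
`(u, v]` is a union of blocks of `σ`: every `σ'` whose interweaving with `σ` is noncrossing
refines it, and it interweaves noncrossingly with `σ` itself. In this form `K` is visibly
antitone with noncrossing values. Conversely, for noncrossing `σ` and `b < d`, if `[b, d)` is a
union of blocks of `K(σ)` then `b ∼ d` in `σ`; as `[p, q)` is such a union whenever `p ∼ q` in
`τ`, this gives `K(σ) ≤ K(τ) ↔ τ ≤ σ`. So `K` is an order embedding of `NC_n` into its dual,
hence a bijection by finiteness, and it carries `[π, 1̂]` onto `[0̂, K(π)]`.
-/

open scoped Classical

/-- No-crossing condition for an arbitrary relation on a linearly ordered type. -/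
def IsNCRel {β : Type*} [LinearOrder β] (R : β → β → Prop) : Prop :=
  ¬ ∃ i j k l : β, i < j ∧ j < k ∧ k < l ∧ R i k ∧ R j l ∧ ¬ R i j

/-- The interweaved union of `π` and `σ`: the points of `π` are placed at the odd
positions `1,3,…,2n-1` and the points of `σ` at the even positions `2,4,…,2n`
(as a relation on `Fin (2n)`). -/
def interRel {n : ℕ} (π σ : Setoid (Fin n)) : Fin (2 * n) → Fin (2 * n) → Prop :=
  fun x y =>
    (∃ i j : Fin n, x = ⟨2 * i.val, by have := i.isLt; omega⟩ ∧
        y = ⟨2 * j.val, by have := j.isLt; omega⟩ ∧ π.r i j) ∨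
    (∃ i j : Fin n, x = ⟨2 * i.val + 1, by have := i.isLt; omega⟩ ∧
        y = ⟨2 * j.val + 1, by have := j.isLt; omega⟩ ∧ σ.r i j)

/-- `σ` is the Kreweras complement of `π`: the maximal noncrossing partition such
that the interweaved union `π ∪̃ σ` is noncrossing. -/
def IsKreweras {n : ℕ} (π σ : Setoid (Fin n)) : Prop :=
  IsNoncrossing σ ∧ IsNCRel (interRel π σ) ∧
    ∀ σ' : Setoid (Fin n), IsNoncrossing σ' → IsNCRel (interRel π σ') → σ' ≤ σ

open Set
open scoped Interval symmDiff

namespace Setoid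

variable {α : Type*} {σ τ : Setoid α} {s t : Set α}

def Saturated (σ : Setoid α) (s : Set α) : Prop :=
  ∀ ⦃a b⦄, σ a b → a ∈ s → b ∈ s

theorem saturated_empty (σ : Setoid α) : σ.Saturated ∅ := fun _ _ _ h => h

theorem Saturated.union (hs : σ.Saturated s) (ht : σ.Saturated t) : σ.Saturated (s ∪ t) :=
  fun _ _ hab h => h.imp (hs hab) (ht hab)

theorem Saturated.sdiff (hs : σ.Saturated s) (ht : σ.Saturated t) : σ.Saturated (s \ t) :=
  fun _ _ hab h => ⟨hs hab h.1, fun hb => h.2 (ht (σ.symm' hab) hb)⟩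

theorem Saturated.symmDiff (hs : σ.Saturated s) (ht : σ.Saturated t) : σ.Saturated (s ∆ t) :=
  (hs.sdiff ht).union (ht.sdiff hs)

theorem Saturated.of_le (h : σ ≤ τ) (hs : τ.Saturated s) : σ.Saturated s :=
  fun _ _ hab => hs (h hab)

theorem le_of_forall_lt [LinearOrder α] (h : ∀ p q, p < q → σ p q → τ p q) : σ ≤ τ := by
  intro p q hpq
  rcases lt_trichotomy p q with hlt | rfl | hgt
  · exact h p q hlt hpq
  · exact τ.refl' p
  · exact τ.symm' (h q p hgt (σ.symm' hpq))

end Setoid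

section Kreweras

variable {α : Type*} [LinearOrder α] {σ τ : Setoid α} {a b d u v : α}

theorem Set.uIoc_eq_symmDiff (u v w : α) : Ι u w = Ι u v ∆ Ι v w := by
  ext x
  simp only [mem_symmDiff, mem_uIoc]
  grind

def kreweras (σ : Setoid α) : Setoid α where
  r u v := σ.Saturated (Ι u v)
  iseqv :=
    { refl := fun u => by simpa using σ.saturated_empty
      symm := fun h => by rwa [uIoc_comm]
      trans := fun {u v w} h₁ h₂ => by rw [uIoc_eq_symmDiff u v w]; exact h₁.symmDiff h₂ }

theorem kreweras_rel_iff : kreweras σ u v ↔ σ.Saturated (Ι u v) := Iff.rfl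

theorem isNCRel_kreweras (σ : Setoid α) : IsNCRel (kreweras σ) := by
  rintro ⟨i, j, k, l, hij, hjk, hkl, hik, hjl, hnij⟩
  have hdiff : Ι i j = Ι i k \ Ι j l := by
    ext x
    simp only [mem_sdiff, mem_uIoc]
    grind
  exact hnij (by rw [kreweras_rel_iff, hdiff]; exact hik.sdiff hjl)

theorem kreweras_antitone : Antitone (kreweras : Setoid α → Setoid α) :=
  fun _ _ h _ _ huv => huv.of_le h

theorem kreweras_saturated_Ico (hpq : σ a b) : (kreweras σ).Saturated (Ico a b) := by
  intro x y hxy hx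
  by_contra hy
  have ha := @hxy a b hpq
  have hb := @hxy b a (σ.symm' hpq)
  simp only [mem_Ico, mem_uIoc] at hx hy ha hb
  grind

namespace IsNCRel

theorem mem_Ioo (hσ : IsNCRel σ) (huv : σ u v) (ha : a ∈ Ioo u v) (hua : ¬σ u a)
    (hab : σ a b) : b ∈ Ioo u v := by
  rcases lt_trichotomy b u with hbu | rfl | hub
  · refine (hσ ⟨b, u, a, v, hbu, ha.1, ha.2, σ.symm' hab, huv, fun hbu => hua ?_⟩).elim
    exact σ.trans' (σ.symm' hbu) (σ.symm' hab)
  · exact (hua (σ.symm' hab)).elim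
  rcases lt_trichotomy b v with hbv | rfl | hvb
  · exact ⟨hub, hbv⟩
  · exact (hua (σ.trans' huv (σ.symm' hab))).elim
  · exact (hσ ⟨u, a, v, b, ha.1, ha.2, hvb, huv, hab, hua⟩).elim

theorem saturated_Ioo (hσ : IsNCRel σ) (huv : σ u v) (hgap : ∀ z ∈ Ioo u v, ¬σ u z) :
    σ.Saturated (Ioo u v) :=
  fun a _ hab ha => hσ.mem_Ioo huv ha (hgap a ha) hab

theorem saturated_Icc (hσ : IsNCRel σ) (huv : σ u v) (hcls : ∀ z, σ u z → z ∈ Icc u v) :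
    σ.Saturated (Icc u v) := by
  intro a b hab ha
  by_cases hua : σ u a
  · exact hcls b (σ.trans' hua hab)
  have ha' : a ∈ Ioo u v :=
    ⟨ha.1.lt_of_ne fun h => hua (h ▸ σ.refl' u), ha.2.lt_of_ne fun h => hua (h ▸ huv)⟩
  exact Ioo_subset_Icc_self (hσ.mem_Ioo huv ha' hua hab)

/-- Walk right from `b`, keeping `(b, x]` a union of blocks: the point `y` after `x` is either
the next element of the block of `b`, or the first element of a block lying entirely beyond `x`,
which is then absorbed; any other case contradicts the `kreweras σ`-saturation of `[b, d)`. -/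
theorem rel_of_saturated_Ioc [Finite α] (hσ : IsNCRel σ) (x : α) :
    ∀ b, b ≤ x → b < d → σ.Saturated (Ioc b x) → (kreweras σ).Saturated (Ico b d) → σ b d := by
  induction x using WellFoundedGT.induction with
  | _ x ih =>
  intro b hbx hbd hsat hK
  have hxd : x < d :=
    (hK (show kreweras σ b x by rwa [kreweras_rel_iff, uIoc_of_le hbx]) ⟨le_rfl, hbd⟩).2
  obtain ⟨y, hxy, hyd⟩ := exists_covBy_le_of_lt hxd
  by_cases hpred : ∃ z < y, σ z y
  · obtain ⟨c, ⟨hcy, hc⟩, hcmax⟩ :=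
      exists_max_image {z | z < y ∧ σ z y} id (toFinite _) hpred
    have hcx : c ≤ x := hxy.le_of_lt hcy
    have hgap : σ.Saturated (Ioc c x) := by
      rw [← hxy.Ioo_eq_Ioc]
      exact hσ.saturated_Ioo hc
        fun z hz hcz => (hcmax z ⟨hz.2, σ.trans' (σ.symm' hcz) hc⟩).not_gt hz.1
    have hbc : b ≤ c :=
      (hK ((kreweras σ).symm' (show kreweras σ c x by rwa [kreweras_rel_iff, uIoc_of_le hcx]))
        ⟨hbx, hxd⟩).1
    have hcb : c ≤ b := not_lt.1 fun hbc => (hsat hc ⟨hbc, hcx⟩).2.not_gt hxy.lt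
    have hby : σ b y := le_antisymm hcb hbc ▸ hc
    rcases hyd.eq_or_lt with rfl | hyd
    · exact hby
    have hKy : (kreweras σ).Saturated (Ico y d) := by
      have : Ico y d = Ico b d \ Ico b y := by
        ext z
        simp only [mem_Ico, mem_sdiff]
        grind
      rw [this]
      exact hK.sdiff (kreweras_saturated_Ico hby)
    exact σ.trans' hby (ih y hxy.lt y le_rfl hyd (by simpa using σ.saturated_empty) hKy)
  · push Not at hpred
    obtain ⟨M, hyM, hMmax⟩ := exists_max_image {z | σ y z} id (toFinite _) ⟨y, σ.refl' y⟩
    have hcls : ∀ z, σ y z → z ∈ Icc y M :=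
      fun z hz => ⟨not_lt.1 fun h => hpred z h (σ.symm' hz), hMmax z hz⟩
    have hxM : x < M := hxy.lt.trans_le (hcls M hyM).1
    refine ih M hxM b (hbx.trans hxM.le) hbd ?_ hK
    have hIoc : Ioc x M = Icc y M := by rw [← Ioi_inter_Iic, hxy.Ioi_eq, Ici_inter_Iic]
    rw [← Ioc_union_Ioc_eq_Ioc hbx hxM.le, hIoc]
    exact hsat.union (hσ.saturated_Icc hyM hcls)

theorem rel_of_kreweras_saturated_Ico [Finite α] (hσ : IsNCRel σ) (hbd : b < d)
    (hK : (kreweras σ).Saturated (Ico b d)) : σ b d :=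
  hσ.rel_of_saturated_Ioc b b le_rfl hbd (by simpa using σ.saturated_empty) hK

theorem kreweras_le_kreweras_iff [Finite α] (hσ : IsNCRel σ) :
    kreweras σ ≤ kreweras τ ↔ τ ≤ σ :=
  ⟨fun h => Setoid.le_of_forall_lt fun _ _ hpq hτ =>
      hσ.rel_of_kreweras_saturated_Ico hpq ((kreweras_saturated_Ico hτ).of_le h),
    fun h => kreweras_antitone h⟩

end IsNCRel

theorem exists_kreweras_eq [Finite α] (hτ : IsNCRel τ) :
    ∃ σ : Setoid α, IsNCRel σ ∧ kreweras σ = τ := by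
  let f (σ : {σ : Setoid α // IsNCRel σ}) : {σ : Setoid α // IsNCRel σ} :=
    ⟨kreweras σ.1, isNCRel_kreweras σ.1⟩
  have hf : f.Injective := fun σ σ' h => Subtype.ext <| le_antisymm
    ((σ'.2.kreweras_le_kreweras_iff).1 (congrArg Subtype.val h).ge)
    ((σ.2.kreweras_le_kreweras_iff).1 (congrArg Subtype.val h).le)
  obtain ⟨σ, hσ⟩ := Finite.injective_iff_surjective.1 hf ⟨τ, hτ⟩
  exact ⟨σ, σ.2, congrArg Subtype.val hσ⟩

noncomputable def krewerasIntervalIso [Finite α] (π : Setoid α) :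
    {σ : Setoid α // IsNCRel σ ∧ π ≤ σ} ≃o {τ : Setoid α // IsNCRel τ ∧ τ ≤ kreweras π}ᵒᵈ :=
  OrderIso.ofSurjective
    (OrderEmbedding.ofMapLEIff
      (fun σ => OrderDual.toDual ⟨kreweras σ.1, isNCRel_kreweras _, kreweras_antitone σ.2.2⟩)
      fun σ σ' => σ'.2.1.kreweras_le_kreweras_iff)
    fun τ => by
      obtain ⟨σ, hσ, hστ⟩ := exists_kreweras_eq (OrderDual.ofDual τ).2.1
      exact ⟨⟨σ, hσ, hσ.kreweras_le_kreweras_iff.1 (hστ ▸ (OrderDual.ofDual τ).2.2)⟩,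
        congrArg OrderDual.toDual (Subtype.ext hστ)⟩

end Kreweras

section Interweaving

variable {n : ℕ} {π σ : Setoid (Fin n)} {i j : Fin n}

/-- With 0-based positions, the points of `π` sit at the even positions of `interRel π σ`. -/
def evenPos (i : Fin n) : Fin (2 * n) := ⟨2 * i.val, by have := i.isLt; omega⟩

def oddPos (i : Fin n) : Fin (2 * n) := ⟨2 * i.val + 1, by have := i.isLt; omega⟩

@[simp] theorem evenPos_lt_evenPos : evenPos i < evenPos j ↔ i < j := by
  simp only [evenPos, Fin.lt_def]; omega

@[simp] theorem oddPos_lt_oddPos : oddPos i < oddPos j ↔ i < j := by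
  simp only [oddPos, Fin.lt_def]; omega

@[simp] theorem evenPos_lt_oddPos : evenPos i < oddPos j ↔ i ≤ j := by
  simp only [evenPos, oddPos, Fin.mk_lt_mk, Fin.le_def]; omega

@[simp] theorem oddPos_lt_evenPos : oddPos i < evenPos j ↔ i < j := by
  simp only [evenPos, oddPos, Fin.lt_def]; omega

theorem interRel_iff {x y : Fin (2 * n)} : interRel π σ x y ↔
    (∃ i j, x = evenPos i ∧ y = evenPos j ∧ π i j) ∨
      (∃ i j, x = oddPos i ∧ y = oddPos j ∧ σ i j) := Iff.rfl

theorem interRel_evenPos (h : π i j) : interRel π σ (evenPos i) (evenPos j) :=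
  Or.inl ⟨i, j, rfl, rfl, h⟩

theorem interRel_oddPos (h : σ i j) : interRel π σ (oddPos i) (oddPos j) :=
  Or.inr ⟨i, j, rfl, rfl, h⟩

theorem interRel_val_mod_two {x y : Fin (2 * n)} (h : interRel π σ x y) :
    x.val % 2 = y.val % 2 := by
  rcases interRel_iff.1 h with ⟨i, j, rfl, rfl, -⟩ | ⟨i, j, rfl, rfl, -⟩ <;>
    simp [evenPos, oddPos, Nat.add_mod]

theorem not_interRel_evenPos_oddPos : ¬interRel π σ (evenPos i) (oddPos j) := fun h => by
  simpa [evenPos, oddPos, Nat.add_mod] using interRel_val_mod_two h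

theorem not_interRel_oddPos_evenPos : ¬interRel π σ (oddPos i) (evenPos j) := fun h => by
  simpa [evenPos, oddPos, Nat.add_mod] using interRel_val_mod_two h

theorem le_kreweras_of_isNCRel_interRel (h : IsNCRel (interRel π σ)) : σ ≤ kreweras π := by
  refine Setoid.le_of_forall_lt fun u v huv huvσ => ?_
  rw [kreweras_rel_iff, uIoc_of_le huv.le]
  intro a c hac ha
  by_contra hc
  rcases le_or_gt c u with hcu | hcu
  · exact h ⟨evenPos c, oddPos u, evenPos a, oddPos v, by simpa using hcu, by simpa using ha.1,
      by simpa using ha.2, interRel_evenPos (π.symm' hac), interRel_oddPos huvσ,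
      not_interRel_evenPos_oddPos⟩
  · have hvc : v < c := lt_of_not_ge fun hcv => hc ⟨hcu, hcv⟩
    exact h ⟨oddPos u, evenPos a, oddPos v, evenPos c, by simpa using ha.1, by simpa using ha.2,
      by simpa using hvc, interRel_oddPos huvσ, interRel_evenPos hac, not_interRel_oddPos_evenPos⟩

theorem isNCRel_interRel_kreweras (hπ : IsNCRel π) : IsNCRel (interRel π (kreweras π)) := by
  rintro ⟨i, j, k, l, hij, hjk, hkl, hik, hjl, hnij⟩
  rcases interRel_iff.1 hik with ⟨a, c, rfl, rfl, hac⟩ | ⟨a, c, rfl, rfl, hac⟩ <;>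
    rcases interRel_iff.1 hjl with ⟨b, d, rfl, rfl, hbd⟩ | ⟨b, d, rfl, rfl, hbd⟩ <;>
    simp only [evenPos_lt_evenPos, oddPos_lt_oddPos, evenPos_lt_oddPos, oddPos_lt_evenPos]
      at hij hjk hkl
  · exact hπ ⟨a, b, c, d, hij, hjk, hkl, hac, hbd, fun h => hnij (interRel_evenPos h)⟩
  · rw [kreweras_rel_iff, uIoc_of_le (hjk.trans_le hkl).le] at hbd
    exact (hbd (π.symm' hac) ⟨hjk, hkl⟩).1.not_ge hij
  · rw [kreweras_rel_iff, uIoc_of_le (hij.trans_le hjk).le] at hac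
    exact (hac hbd ⟨hij, hjk⟩).2.not_gt hkl
  · exact isNCRel_kreweras π ⟨a, b, c, d, hij, hjk, hkl, hac, hbd,
      fun h => hnij (interRel_oddPos h)⟩

theorem IsKreweras.eq_kreweras (h : IsKreweras π σ) (hπ : IsNoncrossing π) : σ = kreweras π :=
  le_antisymm (le_kreweras_of_isNCRel_interRel h.2.1)
    (h.2.2 _ (isNCRel_kreweras π) (isNCRel_interRel_kreweras hπ))

end Interweaving

/-- For `π ∈ NC_n`, the interval `[π, 1̂_n]` of `NC_n` is anti-isomorphic to the
interval `[0̂_n, K(π)]` of `NC_n`, via the Kreweras complement `σ ↦ K(σ)`. -/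
theorem stmt16 {n : ℕ} (K : Setoid (Fin n) → Setoid (Fin n))
    (hK : ∀ ρ, IsNoncrossing ρ → IsKreweras ρ (K ρ))
    (π : Setoid (Fin n)) (hπ : IsNoncrossing π) :
    ∃ e : {σ : Setoid (Fin n) // IsNoncrossing σ ∧ π ≤ σ} ≃o
          ({τ : Setoid (Fin n) // IsNoncrossing τ ∧ τ ≤ K π})ᵒᵈ,
      ∀ σ : {σ : Setoid (Fin n) // IsNoncrossing σ ∧ π ≤ σ},
        (OrderDual.ofDual (e σ)).val = K σ.val := by
  rw [(hK π hπ).eq_kreweras hπ]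
  exact ⟨krewerasIntervalIso π, fun σ => ((hK σ.1 σ.2.1).eq_kreweras σ.2.1).symm⟩
end
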